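/- Fix d_B, r ≥ 1, set d_A := r·d_B, let ε ∈ (0,1) and θ ∈ (π/2, π] with cos θ = −ε/2, and let O be the d_A×d_A diagonal matrix with diagonal entries ε·(e^{iθ}, e^{−iθ}, e^{iθ}, e^{−iθ}, …) alternating, with last diagonal entry 0 if d_A is odd. For U ∈ U(d_A) set V_U := U(1 + O)U†, regarded as an isometry ℂ^{d_A} → ℂ^{d_B}⊗ℂ^{r} via the identification ℂ^{d_A} ≅ ℂ^{d_B}⊗ℂ^{r}, and let J_U := Tr_E[(1_{d_A} ⊗ V_U) Ψ (1_{d_A} ⊗ V_U)†] be the Choi state. Define f(U₁, U₂) := ‖J_{U₁} − J_{U₂}‖₁. Then for all unitaries U₁, U₂, U₁′, U₂′ ∈ U(d_A): |f(U₁,U₂) − f(U₁′,U₂′)| ≤ 4√(2/d_A)·ε·√(‖U₁−U₁′‖₂² + ‖U₂−U₂′‖₂²). -/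

import Mathlib

noncomputable section
open scoped Kronecker Matrix ComplexOrder
open MeasureTheory

namespace Stmt

instance {m n : Type*} : MeasurableSpace (Matrix m n ℂ) := by unfold Matrix; infer_instance

/-- Trace norm `‖X‖₁ = Tr √(XᴴX)` (sum of singular values). -/
def traceNorm {m n : Type*} [Fintype m] [Fintype n] [DecidableEq n] (X : Matrix m n ℂ) : ℝ :=
  (((Matrix.posSemidef_conjTranspose_mul_self X).1.eigenvectorUnitary : Matrix n n ℂ) *
    Matrix.diagonal (fun i => ((Real.sqrt ((Matrix.posSemidef_conjTranspose_mul_self X).1.eigenvalues i) : ℝ) : ℂ)) *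
    (star (Matrix.posSemidef_conjTranspose_mul_self X).1.eigenvectorUnitary : Matrix n n ℂ)).trace.re

/-- ℓ²→ℓ² operator norm of a matrix (largest singular value). -/
def opNorm {m n : Type*} [Fintype m] [Fintype n] [DecidableEq n] (X : Matrix m n ℂ) : ℝ :=
  ‖LinearMap.toContinuousLinearMap (Matrix.toEuclideanLin X)‖

/-- Frobenius norm `‖X‖₂ = √(Tr(XᴴX))`. -/
def frobNorm {m n : Type*} [Fintype m] [Fintype n] (X : Matrix m n ℂ) : ℝ :=
  Real.sqrt ((Xᴴ * X).trace.re)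

/-- Projector `|Ψ⟩⟨Ψ|` onto the maximally entangled unit vector
`|Ψ⟩ = (1/√d) ∑ᵢ |i⟩⊗|i⟩`. -/
def Psi (d : ℕ) : Matrix (Fin d × Fin d) (Fin d × Fin d) ℂ :=
  fun p q => if p.1 = p.2 ∧ q.1 = q.2 then (1 / (d : ℂ)) else 0

/-- Partial trace over the environment (last) factor `E`. -/
def ptrE {A A' B E : Type*} [Fintype E] (M : Matrix (A × B × E) (A' × B × E) ℂ) :
    Matrix (A × B) (A' × B) ℂ :=
  fun x y => ∑ e, M (x.1, x.2, e) (y.1, y.2, e)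

/-- Partial trace over the last factor `E` of a fourfold product. -/
def ptrE4 {A F B E : Type*} [Fintype E]
    (M : Matrix (A × F × B × E) (A × F × B × E) ℂ) : Matrix (A × F × B) (A × F × B) ℂ :=
  fun x y => ∑ e, M (x.1, x.2.1, x.2.2, e) (y.1, y.2.1, y.2.2, e)

/-- Partial trace over the first factor `F`. -/
def ptrF {F X Y : Type*} [Fintype F] (M : Matrix (F × X) (F × Y) ℂ) : Matrix X Y ℂ :=
  fun x y => ∑ f, M (f, x) (f, y)

/-- Partial trace over the second factor. -/
def ptrSecond {F X : Type*} [Fintype X] (M : Matrix (F × X) (F × X) ℂ) : Matrix F F ℂ :=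
  fun f f' => ∑ x, M (f, x) (f', x)

/-- The diagonal matrix `O = ε·diag(e^{iθ}, e^{−iθ}, …)` (last entry `0` if `d` is odd). -/
def Omat (d : ℕ) (ε θ : ℝ) : Matrix (Fin d) (Fin d) ℂ :=
  Matrix.diagonal fun j =>
    if Odd d ∧ (j : ℕ) = d - 1 then 0
    else if Even (j : ℕ) then (ε : ℂ) * Complex.exp (Complex.I * (θ : ℂ))
    else (ε : ℂ) * Complex.exp (-(Complex.I * (θ : ℂ)))

/-- The traceless version `Ō = O − (Tr O / d)·1`. -/
def Obar (d : ℕ) (ε θ : ℝ) : Matrix (Fin d) (Fin d) ℂ :=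
  Omat d ε θ - ((Omat d ε θ).trace / (d : ℂ)) • 1

/-- Identification of `B × E` indices with `Fin (r·d_B)`. -/
def idxBE {d_B r : ℕ} (p : Fin d_B × Fin r) : Fin (r * d_B) :=
  finCongr (Nat.mul_comm d_B r) (finProdFinEquiv p)

/-- Reindex the rows of a square matrix on `ℂ^{r·d_B}` so that it becomes a map
`ℂ^{r d_B} → ℂ^{d_B}⊗ℂ^{r}`. -/
def toBE {d_B r : ℕ} (M : Matrix (Fin (r * d_B)) (Fin (r * d_B)) ℂ) :
    Matrix (Fin d_B × Fin r) (Fin (r * d_B)) ℂ :=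
  fun p a => M (idxBE p) a

/-- `Ψ` with its second (column) tensor factor reindexed as `B × E`. -/
def PsiBE (d_B r : ℕ) :
    Matrix (Fin (r * d_B) × Fin (r * d_B)) (Fin (r * d_B) × (Fin d_B × Fin r)) ℂ :=
  fun p q => Psi (r * d_B) p (q.1, idxBE q.2)

/-- The inclusion `S` of the first `d_A` standard basis vectors of `ℂ^{d_B}⊗ℂ^{r}`. -/
def Smat (d_A d_B r : ℕ) : Matrix (Fin d_B × Fin r) (Fin d_A) ℂ :=
  fun p a => if ((finProdFinEquiv p : Fin (d_B * r)) : ℕ) = (a : ℕ) then 1 else 0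

/-- `V = √(1−ε²)·|0⟩_F ⊗ V₀ + ε·|1⟩_F ⊗ V₁`. -/
def Vfull {d_A d_B r : ℕ} (ε : ℝ) (V0 VU : Matrix (Fin d_B × Fin r) (Fin d_A) ℂ) :
    Matrix (Fin 2 × Fin d_B × Fin r) (Fin d_A) ℂ :=
  fun p a =>
    (if p.1 = 0 then (Real.sqrt (1 - ε ^ 2) : ℂ) * V0 p.2 a else 0) +
    (if p.1 = 1 then (ε : ℂ) * VU p.2 a else 0)

/-- Kraus operator `K_i = (1 ⊗ ⟨i|_E) V₀`. -/
def Kraus {d_A d_B r : ℕ} (V0 : Matrix (Fin d_B × Fin r) (Fin d_A) ℂ) (i : Fin r) :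
    Matrix (Fin d_B) (Fin d_A) ℂ :=
  fun b a => V0 (b, i) a

/-- `V_U = U(1+O)U†` regarded as a map `ℂ^{r d_B} → ℂ^{d_B}⊗ℂ^{r}`. -/
def Veq (d_B r : ℕ) (ε θ : ℝ) (U : Matrix (Fin (r * d_B)) (Fin (r * d_B)) ℂ) :
    Matrix (Fin d_B × Fin r) (Fin (r * d_B)) ℂ :=
  toBE (U * (1 + Omat (r * d_B) ε θ) * Uᴴ)

/-- Choi state `J_U = Tr_E[(1 ⊗ V_U) Ψ (1 ⊗ V_U)†]` in the case `d_A = r·d_B`. -/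
def Jeq (d_B r : ℕ) (ε θ : ℝ) (U : Matrix (Fin (r * d_B)) (Fin (r * d_B)) ℂ) :
    Matrix (Fin (r * d_B) × Fin d_B) (Fin (r * d_B) × Fin d_B) ℂ :=
  ptrE (((1 : Matrix (Fin (r * d_B)) (Fin (r * d_B)) ℂ) ⊗ₖ Veq d_B r ε θ U) * Psi (r * d_B) *
    ((1 : Matrix (Fin (r * d_B)) (Fin (r * d_B)) ℂ) ⊗ₖ Veq d_B r ε θ U)ᴴ)

/-- Choi state `J_U = Tr_E[(1 ⊗ V_U) Ψ (1 ⊗ V_U)†]` in the case `d_A ≤ r·d_B`. -/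
def Jle (d_A d_B r : ℕ) (ε : ℝ) (V0 : Matrix (Fin d_B × Fin r) (Fin d_A) ℂ)
    (U : Matrix (Fin d_B × Fin r) (Fin d_B × Fin r) ℂ) :
    Matrix (Fin d_A × Fin 2 × Fin d_B) (Fin d_A × Fin 2 × Fin d_B) ℂ :=
  ptrE4 (((1 : Matrix (Fin d_A) (Fin d_A) ℂ) ⊗ₖ Vfull ε V0 (U * Smat d_A d_B r)) * Psi d_A *
    ((1 : Matrix (Fin d_A) (Fin d_A) ℂ) ⊗ₖ Vfull ε V0 (U * Smat d_A d_B r))ᴴ)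

/-- `C = Tr_E[(1 ⊗ Ṽ₀) Ψ (1 ⊗ (Ṽ_{U₁} − Ṽ_{U₂}))†]`. -/
def Cmat (d_A d_B r : ℕ) (V0 : Matrix (Fin d_B × Fin r) (Fin d_A) ℂ)
    (U₁ U₂ : Matrix (Fin d_B × Fin r) (Fin d_B × Fin r) ℂ) :
    Matrix (Fin d_A × Fin d_B) (Fin d_A × Fin d_B) ℂ :=
  ptrE (((1 : Matrix (Fin d_A) (Fin d_A) ℂ) ⊗ₖ V0) * Psi d_A *
    ((1 : Matrix (Fin d_A) (Fin d_A) ℂ) ⊗ₖ (U₁ * Smat d_A d_B r - U₂ * Smat d_A d_B r))ᴴ)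

/-- `A_U = Tr_E[(1 ⊗ U Ō U†) Ψ]`. -/
def Amat (d_B r : ℕ) (ε θ : ℝ) (U : Matrix (Fin (r * d_B)) (Fin (r * d_B)) ℂ) :
    Matrix (Fin (r * d_B) × Fin d_B) (Fin (r * d_B) × Fin d_B) ℂ :=
  ptrE (((1 : Matrix (Fin (r * d_B)) (Fin (r * d_B)) ℂ) ⊗ₖ toBE (U * Obar (r * d_B) ε θ * Uᴴ)) *
    PsiBE d_B r)


section AuxToolkit
open Matrix Complex
open scoped ComplexOrder
set_option linter.unusedSectionVars false
set_option linter.dupNamespace false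
set_option maxHeartbeats 1000000
section

def sqn {ι : Type*} [Fintype ι] (x : ι → ℂ) : ℝ := ∑ i, ‖x i‖ ^ 2

lemma sqn_nonneg {ι : Type*} [Fintype ι] (x : ι → ℂ) : 0 ≤ sqn x :=
  Finset.sum_nonneg fun _ _ => by positivity

lemma sqn_eq_re_dot {ι : Type*} [Fintype ι] (x : ι → ℂ) : sqn x = (star x ⬝ᵥ x).re := by
  simp only [dotProduct, Pi.star_apply, RCLike.star_def, Complex.re_sum, sqn]
  refine Finset.sum_congr rfl fun i _ => ?_
  rw [mul_comm, Complex.mul_conj, Complex.ofReal_re, Complex.normSq_eq_norm_sq]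

lemma abs_dot_le {ι : Type*} [Fintype ι] (u w : ι → ℂ) :
    ‖star u ⬝ᵥ w‖ ≤ Real.sqrt (sqn u) * Real.sqrt (sqn w) := by
  let u' : EuclideanSpace ℂ ι := (WithLp.equiv 2 _).symm u
  let w' : EuclideanSpace ℂ ι := (WithLp.equiv 2 _).symm w
  have h := norm_inner_le_norm (𝕜 := ℂ) u' w'
  have hi : (inner ℂ u' w' : ℂ) = star u ⬝ᵥ w := by
    rw [PiLp.inner_apply]
    simp [u', w', dotProduct, RCLike.inner_apply, mul_comm]
  have hu : ‖u'‖ = Real.sqrt (sqn u) := by rw [EuclideanSpace.norm_eq]; rfl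
  have hw : ‖w'‖ = Real.sqrt (sqn w) := by rw [EuclideanSpace.norm_eq]; rfl
  rwa [hi, hu, hw] at h

lemma re_dot_le {ι : Type*} [Fintype ι] (u w : ι → ℂ) :
    (star u ⬝ᵥ w).re ≤ Real.sqrt (sqn u) * Real.sqrt (sqn w) :=
  (Complex.re_le_norm _).trans (abs_dot_le u w)

variable {n k : Type*} [Fintype n] [Fintype k] [DecidableEq n]

lemma sqn_mulVec {m : Type*} [Fintype m] (M : Matrix m n ℂ) (x : n → ℂ) :
    sqn (M *ᵥ x) = (star x ⬝ᵥ ((Mᴴ * M) *ᵥ x)).re := by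
  rw [sqn_eq_re_dot, star_mulVec, ← mulVec_mulVec, dotProduct_mulVec (star x) Mᴴ]

lemma diag_entry_eq (A : Matrix n n ℂ) (M : Matrix n n ℂ) (i : n) :
    (Aᴴ * M * A) i i = star (fun p => A p i) ⬝ᵥ (M *ᵥ fun p => A p i) := by
  simp only [mul_apply, conjTranspose_apply, dotProduct, mulVec, Pi.star_apply,
    Finset.sum_mul, Finset.mul_sum]
  rw [Finset.sum_comm]
  refine Finset.sum_congr rfl fun p _ => Finset.sum_congr rfl fun q _ => by ring

lemma sandwich (V A B : Matrix n n ℂ) (h : star V * V = 1) :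
    (V * A * star V) * (V * B * star V) = V * (A * B) * star V := by
  have h1 : (V * A * star V) * (V * B * star V) = V * A * (star V * V) * (B * star V) := by
    noncomm_ring
  rw [h1, h, mul_one]
  noncomm_ring

lemma unconj (V A : Matrix n n ℂ) (h : star V * V = 1) :
    star V * (V * A * star V) * V = A := by
  have h1 : star V * (V * A * star V) * V = (star V * V) * A * (star V * V) := by
    noncomm_ring
  rw [h1, h, one_mul, mul_one]

lemma trace_conj (V M : Matrix n n ℂ) (h : star V * V = 1) :
    (V * M * star V).trace = M.trace := by
  rw [trace_mul_cycle, h, one_mul]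

lemma quad_le (V : Matrix n n ℂ) (hVVs : V * star V = 1) (c : n → ℝ)
    (hc0 : ∀ i, 0 ≤ c i) (hc1 : ∀ i, c i ≤ 1) (x : n → ℂ) :
    (star x ⬝ᵥ ((V * diagonal (fun i => (c i : ℂ)) * star V) *ᵥ x)).re ≤ sqn x := by
  set y := star V *ᵥ x with hy
  have h1 : (V * diagonal (fun i => (c i : ℂ)) * star V) *ᵥ x
      = V *ᵥ (diagonal (fun i => (c i : ℂ)) *ᵥ y) := by
    rw [mulVec_mulVec, mulVec_mulVec]
  have hss : (star V)ᴴ = V := by simp [star_eq_conjTranspose]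
  have h2 : star x ᵥ* V = star y := by
    rw [hy, star_mulVec, hss]
  rw [h1, dotProduct_mulVec, h2]
  have h3 : (star y ⬝ᵥ (diagonal (fun i => (c i : ℂ)) *ᵥ y)).re
      = ∑ i, c i * ‖y i‖ ^ 2 := by
    simp only [dotProduct, Pi.star_apply, Complex.re_sum]
    refine Finset.sum_congr rfl fun i _ => ?_
    rw [mulVec_diagonal]
    have : (starRingEnd ℂ) (y i) * ((c i : ℂ) * y i) = (c i : ℂ) * ((y i) * (starRingEnd ℂ) (y i)) := by ring
    rw [RCLike.star_def, this, Complex.mul_conj, ← Complex.ofReal_mul, Complex.ofReal_re,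
      Complex.normSq_eq_norm_sq]
  rw [h3]
  have h4 : sqn y ≤ sqn x := by
    have hq := sqn_mulVec (star V) x
    rw [hss, hVVs, one_mulVec, ← sqn_eq_re_dot] at hq
    exact le_of_eq hq
  calc ∑ i, c i * ‖y i‖ ^ 2 ≤ ∑ i, ‖y i‖ ^ 2 := by
        refine Finset.sum_le_sum fun i _ => ?_
        have := hc1 i
        nlinarith [sq_nonneg ‖y i‖, hc0 i]
    _ = sqn y := rfl
    _ ≤ sqn x := h4


def frobSq {m n : Type*} [Fintype m] [Fintype n] (X : Matrix m n ℂ) : ℝ :=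
  ((Xᴴ * X).trace).re

variable {n k m : Type*} [Fintype n] [Fintype k] [Fintype m] [DecidableEq n]

lemma frobNorm_eq_sqrt (M : Matrix m k ℂ) : frobNorm M = Real.sqrt (frobSq M) := rfl

lemma frobSq_eq_sum (M : Matrix m k ℂ) : frobSq M = ∑ j, ∑ i, ‖M i j‖ ^ 2 := by
  simp only [frobSq, Matrix.trace, Matrix.diag, mul_apply, conjTranspose_apply, Complex.re_sum]
  refine Finset.sum_congr rfl fun j _ => Finset.sum_congr rfl fun i _ => ?_
  rw [RCLike.star_def, mul_comm, Complex.mul_conj, Complex.ofReal_re,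
    Complex.normSq_eq_norm_sq]

lemma frobSq_eq_sum_sqn (M : Matrix m k ℂ) : frobSq M = ∑ j, sqn (fun i => M i j) :=
  frobSq_eq_sum M

lemma frobSq_nonneg (M : Matrix m k ℂ) : 0 ≤ frobSq M := by
  rw [frobSq_eq_sum]
  exact Finset.sum_nonneg fun _ _ => Finset.sum_nonneg fun _ _ => by positivity

lemma frobNorm_nonneg (M : Matrix m k ℂ) : 0 ≤ frobNorm M := Real.sqrt_nonneg _

lemma frobNorm_sq (M : Matrix m k ℂ) : frobNorm M ^ 2 = frobSq M := by
  rw [frobNorm_eq_sqrt, Real.sq_sqrt (frobSq_nonneg M)]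

lemma frobSq_conjTranspose (M : Matrix m k ℂ) : frobSq Mᴴ = frobSq M := by
  rw [frobSq_eq_sum, frobSq_eq_sum, Finset.sum_comm]
  simp [conjTranspose_apply]

lemma frobNorm_conjTranspose (M : Matrix m k ℂ) : frobNorm Mᴴ = frobNorm M := by
  rw [frobNorm_eq_sqrt, frobNorm_eq_sqrt, frobSq_conjTranspose]


variable {n k : Type*} [Fintype n] [Fintype k] [DecidableEq n]

lemma trace_re_le_traceNorm (W Y : Matrix n n ℂ)
    (hW : ∀ x : n → ℂ, sqn (Wᴴ *ᵥ x) ≤ sqn x) :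
    ((W * Y).trace).re ≤ traceNorm Y := by
  have hK := Matrix.posSemidef_conjTranspose_mul_self Y
  have hKh := hK.1
  set V : Matrix n n ℂ := (hKh.eigenvectorUnitary : Matrix n n ℂ) with hV
  set μ : n → ℝ := fun i => Real.sqrt (hKh.eigenvalues i) with hμ
  set D : Matrix n n ℂ := diagonal (RCLike.ofReal ∘ μ) with hD
  have hVsV : star V * V = 1 := mem_unitaryGroup_iff'.mp hKh.eigenvectorUnitary.2
  have hVVs : V * star V = 1 := mem_unitaryGroup_iff.mp hKh.eigenvectorUnitary.2
  have hμ0 : ∀ i, 0 ≤ μ i := fun i => Real.sqrt_nonneg _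
  have hss : (star V)ᴴ = V := by simp [star_eq_conjTranspose]
  have hTN : traceNorm Y = ∑ i, μ i := by
    show ((V * diagonal (fun i => ((Real.sqrt (hKh.eigenvalues i) : ℝ) : ℂ)) * star V).trace).re = _
    rw [trace_conj _ _ hVsV, trace_diagonal, Complex.re_sum]
    simp [μ]
  have hYY : Yᴴ * Y = V * (D * D) * star V := by
    have hDD : D * D = diagonal (RCLike.ofReal ∘ hKh.eigenvalues) := by
      rw [hD, diagonal_mul_diagonal]
      congr 1
      funext i
      show ((μ i : ℝ) : ℂ) * ((μ i : ℝ) : ℂ) = ((hKh.eigenvalues i : ℝ) : ℂ)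
      rw [← Complex.ofReal_mul, hμ, Real.mul_self_sqrt (hK.eigenvalues_nonneg i)]
    rw [hDD]
    exact hKh.spectral_theorem
  have htr : (W * Y).trace = ((star V) * (W * Y) * V).trace := by
    rw [trace_mul_cycle, ← mul_assoc, hVVs, one_mul]
  rw [htr, Matrix.trace, Complex.re_sum, hTN]
  refine Finset.sum_le_sum fun i _ => ?_
  set v : n → ℂ := fun p => V p i with hv
  have hdiag : ((star V) * (W * Y) * V) i i = star v ⬝ᵥ ((W * Y) *ᵥ v) := by
    rw [star_eq_conjTranspose]; exact diag_entry_eq V (W * Y) i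
  have hsplit : star v ⬝ᵥ ((W * Y) *ᵥ v) = star (Wᴴ *ᵥ v) ⬝ᵥ (Y *ᵥ v) := by
    rw [← mulVec_mulVec, dotProduct_mulVec, star_mulVec, conjTranspose_conjTranspose]
  have hsv : sqn v = 1 := by
    have h1 : star v ⬝ᵥ v = (star V * V) i i := by
      simp [dotProduct, mul_apply, star_eq_conjTranspose, conjTranspose_apply, v]
    rw [sqn_eq_re_dot, h1, hVsV]
    simp [one_apply]
  have hYv : sqn (Y *ᵥ v) = μ i ^ 2 := by
    rw [sqn_mulVec, hYY]
    have h2 : star v ⬝ᵥ ((V * (D * D) * star V) *ᵥ v) = (star V * (V * (D * D) * star V) * V) i i := by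
      rw [star_eq_conjTranspose V]; exact (diag_entry_eq V _ i).symm
    rw [h2, unconj _ _ hVsV, hD, diagonal_mul_diagonal, diagonal_apply_eq]
    simp [Function.comp, ← Complex.ofReal_mul, sq]
  calc (Matrix.diag (star V * (W * Y) * V) i).re = (star v ⬝ᵥ ((W * Y) *ᵥ v)).re := by
        rw [Matrix.diag_apply, hdiag]
    _ = (star (Wᴴ *ᵥ v) ⬝ᵥ (Y *ᵥ v)).re := by rw [hsplit]
    _ ≤ Real.sqrt (sqn (Wᴴ *ᵥ v)) * Real.sqrt (sqn (Y *ᵥ v)) := re_dot_le _ _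
    _ ≤ Real.sqrt (sqn v) * Real.sqrt (sqn (Y *ᵥ v)) := by
        refine mul_le_mul_of_nonneg_right (Real.sqrt_le_sqrt (hW v)) (Real.sqrt_nonneg _)
    _ = μ i := by
        rw [hsv, hYv, Real.sqrt_one, one_mul, Real.sqrt_sq (hμ0 i)]


lemma polar (X : Matrix n n ℂ) :
    ∃ W : Matrix n n ℂ, (∀ x : n → ℂ, sqn (Wᴴ *ᵥ x) ≤ sqn x) ∧
      ((W * X).trace).re = traceNorm X := by
  have hK := Matrix.posSemidef_conjTranspose_mul_self X
  have hKh := hK.1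
  set V : Matrix n n ℂ := (hKh.eigenvectorUnitary : Matrix n n ℂ) with hV
  set μ : n → ℝ := fun i => Real.sqrt (hKh.eigenvalues i) with hμ
  set D : Matrix n n ℂ := diagonal (RCLike.ofReal ∘ μ) with hD
  have hVsV : star V * V = 1 := mem_unitaryGroup_iff'.mp hKh.eigenvectorUnitary.2
  have hVVs : V * star V = 1 := mem_unitaryGroup_iff.mp hKh.eigenvectorUnitary.2
  have hμ0 : ∀ i, 0 ≤ μ i := fun i => Real.sqrt_nonneg _
  have hTN : traceNorm X = ∑ i, μ i := by
    show ((V * diagonal (fun i => ((Real.sqrt (hKh.eigenvalues i) : ℝ) : ℂ)) * star V).trace).re = _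
    rw [trace_conj _ _ hVsV, trace_diagonal, Complex.re_sum]
    simp [μ]
  have hXX : Xᴴ * X = V * (D * D) * star V := by
    have hDD : D * D = diagonal (RCLike.ofReal ∘ hKh.eigenvalues) := by
      rw [hD, diagonal_mul_diagonal]
      congr 1
      funext i
      show ((μ i : ℝ) : ℂ) * ((μ i : ℝ) : ℂ) = ((hKh.eigenvalues i : ℝ) : ℂ)
      rw [← Complex.ofReal_mul, hμ, Real.mul_self_sqrt (hK.eigenvalues_nonneg i)]
    rw [hDD]
    exact hKh.spectral_theorem
  set g : n → ℝ := fun i => if μ i = 0 then 0 else (μ i)⁻¹ with hg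
  set Dg : Matrix n n ℂ := diagonal (fun i => ((g i : ℝ) : ℂ)) with hDg
  set P : Matrix n n ℂ := V * Dg * star V with hP
  refine ⟨P * Xᴴ, ?_, ?_⟩
  · -- contraction
    have hstar : star (fun i => ((g i : ℝ) : ℂ)) = fun i => ((g i : ℝ) : ℂ) := by
      funext i; simp [Pi.star_apply, Complex.conj_ofReal]
    have hPh : Pᴴ = P := by
      simp [hP, conjTranspose_mul, hDg, diagonal_conjTranspose, hstar,
        star_eq_conjTranspose, Matrix.mul_assoc]
    have hWWs : (P * Xᴴ) * (P * Xᴴ)ᴴ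
        = V * diagonal (fun i => ((g i * (μ i * μ i) * g i : ℝ) : ℂ)) * star V := by
      rw [conjTranspose_mul, conjTranspose_conjTranspose, hPh]
      have h1 : P * Xᴴ * (X * P) = P * (Xᴴ * X) * P := by noncomm_ring
      rw [h1, hXX, hP, sandwich _ _ _ hVsV, sandwich _ _ _ hVsV]
      have hdd : Dg * (D * D) * Dg
          = diagonal (fun i => ((g i * (μ i * μ i) * g i : ℝ) : ℂ)) := by
        rw [hDg, hD]
        simp only [diagonal_mul_diagonal]
        refine congrArg Matrix.diagonal (funext fun i => ?_)
        simp only [Function.comp_apply]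
        push_cast
        ring_nf
        rfl
      rw [hdd]
    intro x
    rw [sqn_mulVec, conjTranspose_conjTranspose, hWWs]
    refine quad_le V hVVs _ ?_ ?_ x
    · intro i
      by_cases h : μ i = 0 <;> simp [hg, h] <;> positivity
    · intro i
      by_cases h : μ i = 0
      · simp [hg, h]
      · have : g i * (μ i * μ i) * g i = 1 := by
          simp only [hg, h, if_false]
          field_simp
        rw [this]
  · -- trace value
    have h2 : (P * Xᴴ) * X = V * (Dg * (D * D)) * star V := by
      rw [mul_assoc, hXX, hP, sandwich _ _ _ hVsV]
    rw [h2, trace_conj _ _ hVsV, hDg, hD, diagonal_mul_diagonal, diagonal_mul_diagonal,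
      trace_diagonal, hTN, Complex.re_sum]
    refine Finset.sum_congr rfl fun i _ => ?_
    by_cases h : μ i = 0
    · simp [hg, h, Function.comp]
    · have : (g i : ℂ) * ((RCLike.ofReal ∘ μ) i * (RCLike.ofReal ∘ μ) i) = ((μ i : ℝ) : ℂ) := by
        have hne : ((μ i : ℝ) : ℂ) ≠ 0 := Complex.ofReal_ne_zero.mpr h
        simp only [Function.comp_apply, hg, h, if_false]
        push_cast
        field_simp
        rfl
      rw [this, Complex.ofReal_re]


variable {n k m : Type*} [Fintype n] [Fintype k] [Fintype m] [DecidableEq n]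

lemma col_eq_mulVec (W : Matrix n n ℂ) (B : Matrix n k ℂ) (j : k) :
    (fun i => (W * B) i j) = W *ᵥ (fun i => B i j) := by
  funext i
  simp [mul_apply, mulVec, dotProduct]

lemma frobSq_contr_mul (W : Matrix n n ℂ) (hW : ∀ x : n → ℂ, sqn (W *ᵥ x) ≤ sqn x)
    (B : Matrix n k ℂ) : frobSq (W * B) ≤ frobSq B := by
  rw [frobSq_eq_sum_sqn, frobSq_eq_sum_sqn]
  refine Finset.sum_le_sum fun j _ => ?_
  rw [col_eq_mulVec]
  exact hW _

lemma trace_re_le_frob (A C : Matrix n k ℂ) :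
    ((A * Cᴴ).trace).re ≤ frobNorm A * frobNorm C := by
  have h1 : (A * Cᴴ).trace = star (fun p : n × k => C p.1 p.2) ⬝ᵥ (fun p : n × k => A p.1 p.2) := by
    simp only [Matrix.trace, Matrix.diag, mul_apply, conjTranspose_apply, dotProduct,
      Pi.star_apply, RCLike.star_def, Fintype.sum_prod_type]
    exact Finset.sum_congr rfl fun i _ => Finset.sum_congr rfl fun j _ => by ring
  have h2 : sqn (fun p : n × k => C p.1 p.2) = frobSq C := by
    rw [frobSq_eq_sum, sqn, Fintype.sum_prod_type]
    exact Finset.sum_comm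
  have h3 : sqn (fun p : n × k => A p.1 p.2) = frobSq A := by
    rw [frobSq_eq_sum, sqn, Fintype.sum_prod_type]
    exact Finset.sum_comm
  calc ((A * Cᴴ).trace).re ≤ Real.sqrt (sqn (fun p : n × k => C p.1 p.2)) *
        Real.sqrt (sqn (fun p : n × k => A p.1 p.2)) := by rw [h1]; exact re_dot_le _ _
    _ = frobNorm C * frobNorm A := by rw [h2, h3, frobNorm_eq_sqrt, frobNorm_eq_sqrt]
    _ = frobNorm A * frobNorm C := mul_comm _ _

lemma holder (W : Matrix n n ℂ) (hW : ∀ x : n → ℂ, sqn (Wᴴ *ᵥ x) ≤ sqn x)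
    (A B : Matrix n k ℂ) :
    ((W * (A * Bᴴ)).trace).re ≤ frobNorm A * frobNorm B := by
  have h1 : (W * (A * Bᴴ)).trace = (A * (Wᴴ * B)ᴴ).trace := by
    rw [trace_mul_comm, conjTranspose_mul, conjTranspose_conjTranspose, Matrix.mul_assoc]
  rw [h1]
  calc ((A * (Wᴴ * B)ᴴ).trace).re ≤ frobNorm A * frobNorm (Wᴴ * B) := trace_re_le_frob _ _
    _ ≤ frobNorm A * frobNorm B := by
        refine mul_le_mul_of_nonneg_left ?_ (frobNorm_nonneg A)
        rw [frobNorm_eq_sqrt, frobNorm_eq_sqrt]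
        exact Real.sqrt_le_sqrt (frobSq_contr_mul Wᴴ hW B)

lemma key (X Y : Matrix n n ℂ) (A₁ A₂ A₃ A₄ B₁ B₂ B₃ B₄ : Matrix n k ℂ)
    (h : X = Y + (A₁ * B₁ᴴ + A₂ * B₂ᴴ + A₃ * B₃ᴴ + A₄ * B₄ᴴ)) :
    traceNorm X ≤ traceNorm Y + (frobNorm A₁ * frobNorm B₁ + frobNorm A₂ * frobNorm B₂ +
      frobNorm A₃ * frobNorm B₃ + frobNorm A₄ * frobNorm B₄) := by
  obtain ⟨W, hW, hWX⟩ := polar X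
  rw [← hWX, h]
  simp only [mul_add, trace_add, Complex.add_re]
  refine add_le_add (trace_re_le_traceNorm W Y hW) ?_
  refine add_le_add (add_le_add (add_le_add ?_ ?_) ?_) ?_ <;> exact holder W hW _ _


end
end AuxToolkit

section AppAux
open Matrix Complex

variable {n k m : Type*} [Fintype n] [Fintype k] [Fintype m]

lemma frobSq_neg (M : Matrix m k ℂ) : frobSq (-M) = frobSq M := by
  rw [frobSq_eq_sum, frobSq_eq_sum]
  simp

lemma frobNorm_neg' (M : Matrix m k ℂ) : frobNorm (-M) = frobNorm M := by
  rw [frobNorm_eq_sqrt, frobNorm_eq_sqrt, frobSq_neg]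

lemma frobNorm_sub_comm (A B : Matrix m k ℂ) : frobNorm (A - B) = frobNorm (B - A) := by
  rw [← frobNorm_neg' (A - B), neg_sub]

-- triangle inequality via EuclideanSpace
lemma frobNorm_add_le (A B : Matrix m k ℂ) :
    frobNorm (A + B) ≤ frobNorm A + frobNorm B := by
  have key : ∀ M : Matrix m k ℂ, frobNorm M
      = ‖((WithLp.equiv 2 _).symm (fun p : m × k => M p.1 p.2) : EuclideanSpace ℂ (m × k))‖ := by
    intro M
    rw [EuclideanSpace.norm_eq, frobNorm_eq_sqrt, frobSq_eq_sum]
    congr 1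
    rw [Fintype.sum_prod_type, Finset.sum_comm]
    rfl
  rw [key, key, key]
  have := norm_add_le (E := EuclideanSpace ℂ (m × k))
    ((WithLp.equiv 2 _).symm (fun p : m × k => A p.1 p.2))
    ((WithLp.equiv 2 _).symm (fun p : m × k => B p.1 p.2))
  have hadd : ((WithLp.equiv 2 _).symm (fun p : m × k => (A + B) p.1 p.2) : EuclideanSpace ℂ (m × k))
      = (WithLp.equiv 2 _).symm (fun p : m × k => A p.1 p.2)
        + (WithLp.equiv 2 _).symm (fun p : m × k => B p.1 p.2) := rfl
  rw [hadd]
  exact this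

lemma frobSq_unitary_left [DecidableEq n] (U : Matrix n n ℂ) (M : Matrix n k ℂ)
    (hU : Uᴴ * U = 1) : frobSq (U * M) = frobSq M := by
  unfold frobSq
  rw [conjTranspose_mul, Matrix.mul_assoc, ← Matrix.mul_assoc Uᴴ U M, hU, Matrix.one_mul]

lemma frobSq_unitary_right [DecidableEq n] (M : Matrix k n ℂ) (U : Matrix n n ℂ)
    (hU : Uᴴ * U = 1) : frobSq (M * Uᴴ) = frobSq M := by
  rw [← frobSq_conjTranspose (M * Uᴴ), conjTranspose_mul, conjTranspose_conjTranspose,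
    frobSq_unitary_left U Mᴴ hU, frobSq_conjTranspose]

lemma frobSq_le_of_entries (X M : Matrix m k ℂ) (ε : ℝ)
    (h : ∀ i j, ‖X i j‖ ≤ ε * ‖M i j‖) : frobSq X ≤ ε ^ 2 * frobSq M := by
  rw [frobSq_eq_sum, frobSq_eq_sum, Finset.mul_sum]
  refine Finset.sum_le_sum fun j _ => ?_
  rw [Finset.mul_sum]
  refine Finset.sum_le_sum fun i _ => ?_
  have h1 : ‖X i j‖ ^ 2 ≤ (ε * ‖M i j‖) ^ 2 := by
    have := h i j
    nlinarith [norm_nonneg (X i j), norm_nonneg (M i j)]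
  calc ‖X i j‖ ^ 2 ≤ (ε * ‖M i j‖) ^ 2 := h1
    _ = ε ^ 2 * ‖M i j‖ ^ 2 := by ring

lemma frobSq_diagonal [DecidableEq n] (f : n → ℂ) : frobSq (diagonal f) = ∑ i, ‖f i‖ ^ 2 := by
  rw [frobSq_eq_sum]
  refine Finset.sum_congr rfl fun j _ => ?_
  rw [Finset.sum_eq_single j]
  · rw [diagonal_apply_eq]
  · intro i _ hij
    rw [diagonal_apply_ne f hij, norm_zero]
    norm_num
  · intro h
    exact absurd (Finset.mem_univ j) h

section Omat
variable (d : ℕ) (ε θ : ℝ)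

lemma omat_entry_norm (hε0 : 0 < ε) (j : Fin d) :
    ‖(if Odd d ∧ (j : ℕ) = d - 1 then (0 : ℂ)
      else if Even (j : ℕ) then (ε : ℂ) * Complex.exp (Complex.I * (θ : ℂ))
      else (ε : ℂ) * Complex.exp (-(Complex.I * (θ : ℂ))))‖ ≤ ε := by
  have h1 : ‖Complex.exp (Complex.I * (θ : ℂ))‖ = 1 := by
    rw [mul_comm, Complex.norm_exp_ofReal_mul_I]
  have h2 : ‖Complex.exp (-(Complex.I * (θ : ℂ)))‖ = 1 := by
    have : -(Complex.I * (θ : ℂ)) = ((-θ : ℝ) : ℂ) * Complex.I := by push_cast; ring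
    rw [this, Complex.norm_exp_ofReal_mul_I]
  split_ifs
  · simp [le_of_lt hε0]
  · rw [norm_mul, h1, Complex.norm_real]
    simp [abs_of_pos hε0]
  · rw [norm_mul, h2, Complex.norm_real]
    simp [abs_of_pos hε0]

lemma frobSq_mul_omat_le {p : Type*} [Fintype p] (hε0 : 0 < ε)
    (M : Matrix p (Fin d) ℂ) : frobSq (M * Omat d ε θ) ≤ ε ^ 2 * frobSq M := by
  refine frobSq_le_of_entries _ _ ε fun i j => ?_
  simp only [Omat]
  rw [mul_diagonal, norm_mul, mul_comm]
  exact mul_le_mul_of_nonneg_right (omat_entry_norm d ε θ hε0 j) (norm_nonneg _)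

lemma frobSq_omat_mul_le {p : Type*} [Fintype p] (hε0 : 0 < ε)
    (M : Matrix (Fin d) p ℂ) : frobSq (Omat d ε θ * M) ≤ ε ^ 2 * frobSq M := by
  refine frobSq_le_of_entries _ _ ε fun i j => ?_
  simp only [Omat]
  rw [diagonal_mul, norm_mul]
  exact mul_le_mul_of_nonneg_right (omat_entry_norm d ε θ hε0 i) (norm_nonneg _)

lemma frobSq_one_add_omat (hε0 : 0 < ε) (hcos : Real.cos θ = -ε / 2) :
    frobSq (1 + Omat d ε θ) = d := by
  have h : (1 : Matrix (Fin d) (Fin d) ℂ) + Omat d ε θ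
      = diagonal (fun j : Fin d => 1 + (if Odd d ∧ (j : ℕ) = d - 1 then (0 : ℂ)
        else if Even (j : ℕ) then (ε : ℂ) * Complex.exp (Complex.I * (θ : ℂ))
        else (ε : ℂ) * Complex.exp (-(Complex.I * (θ : ℂ))))) := by
    simp only [Omat]
    rw [← Matrix.diagonal_one, Matrix.diagonal_add]
  rw [h, frobSq_diagonal]
  have key : ∀ j : Fin d, ‖(1 + (if Odd d ∧ (j : ℕ) = d - 1 then (0 : ℂ)
        else if Even (j : ℕ) then (ε : ℂ) * Complex.exp (Complex.I * (θ : ℂ))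
        else (ε : ℂ) * Complex.exp (-(Complex.I * (θ : ℂ)))))‖ ^ 2 = 1 := by
    intro j
    have hre1 : (Complex.exp (Complex.I * (θ : ℂ))).re = Real.cos θ := by
      rw [mul_comm]
      exact Complex.exp_ofReal_mul_I_re θ
    have hre2 : (Complex.exp (-(Complex.I * (θ : ℂ)))).re = Real.cos θ := by
      have : -(Complex.I * (θ : ℂ)) = ((-θ : ℝ) : ℂ) * Complex.I := by push_cast; ring
      rw [this, Complex.exp_ofReal_mul_I_re, Real.cos_neg]
    have habs1 : ‖Complex.exp (Complex.I * (θ : ℂ))‖ = 1 := by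
      rw [mul_comm]; exact Complex.norm_exp_ofReal_mul_I θ
    have habs2 : ‖Complex.exp (-(Complex.I * (θ : ℂ)))‖ = 1 := by
      have : -(Complex.I * (θ : ℂ)) = ((-θ : ℝ) : ℂ) * Complex.I := by push_cast; ring
      rw [this]; exact Complex.norm_exp_ofReal_mul_I (-θ)
    have main : ∀ z : ℂ, z.re = Real.cos θ → ‖z‖ = 1 →
        ‖1 + (ε : ℂ) * z‖ ^ 2 = 1 := by
      intro z hzre hzabs
      have hsq : Complex.normSq (1 + (ε : ℂ) * z)
          = 1 + 2 * (ε * z.re) + ε ^ 2 * Complex.normSq z := by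
        simp [Complex.normSq_apply, Complex.add_re, Complex.add_im, Complex.mul_re,
          Complex.mul_im, Complex.ofReal_re, Complex.ofReal_im]
        ring
      have hnz : Complex.normSq z = 1 := by
        rw [← Complex.sq_norm, hzabs]; norm_num
      rw [Complex.sq_norm, hsq, hnz, hzre, hcos]
      ring
    split_ifs
    · norm_num
    · exact main _ hre1 habs1
    · exact main _ hre2 habs2
  rw [Finset.sum_congr rfl fun j _ => key j]
  simp

end Omat

def resh {d_B r d : ℕ} (c : ℂ) (M : Matrix (Fin d_B × Fin r) (Fin d) ℂ) :
    Matrix (Fin d × Fin d_B) (Fin r) ℂ := fun p e => c * M (p.2, e) p.1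

lemma Jeq_eq (d_B r : ℕ) (hd : 0 < r * d_B) (ε θ : ℝ)
    (U : Matrix (Fin (r * d_B)) (Fin (r * d_B)) ℂ) :
    Jeq d_B r ε θ U = resh (((Real.sqrt (r * d_B) : ℝ) : ℂ))⁻¹ (Veq d_B r ε θ U) *
      (resh (((Real.sqrt (r * d_B) : ℝ) : ℂ))⁻¹ (Veq d_B r ε θ U))ᴴ := by
  set c : ℂ := (((Real.sqrt (r * d_B) : ℝ) : ℂ))⁻¹ with hc
  set V := Veq d_B r ε θ U with hV
  have hcc : c * star c = (((r * d_B : ℕ)) : ℂ)⁻¹ := by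
    rw [hc, RCLike.star_def, ← Complex.ofReal_inv, Complex.conj_ofReal, ← Complex.ofReal_mul]
    rw [← mul_inv, Real.mul_self_sqrt (by positivity)]
    push_cast
    ring
  have hstep : ∀ (p q : Fin (r * d_B) × (Fin d_B × Fin r)),
      (((1 : Matrix (Fin (r * d_B)) (Fin (r * d_B)) ℂ) ⊗ₖ V) * Psi (r * d_B) *
        ((1 : Matrix (Fin (r * d_B)) (Fin (r * d_B)) ℂ) ⊗ₖ V)ᴴ) p q
      = V p.2 p.1 * star (V q.2 q.1) * (((r * d_B : ℕ)) : ℂ)⁻¹ := by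
    intro p q
    simp only [mul_apply, conjTranspose_apply, kroneckerMap_apply, Psi, one_apply,
      Fintype.sum_prod_type, ite_and, mul_ite, ite_mul, mul_zero, zero_mul, mul_one, one_mul,
      apply_ite (star : ℂ → ℂ), star_zero,
      Finset.sum_ite_eq, Finset.sum_ite_eq', Finset.mem_univ, if_true, Finset.sum_ite_irrel,
      Finset.sum_const_zero, one_div]
    ring
  ext x y
  obtain ⟨a, b⟩ := x
  obtain ⟨a', b'⟩ := y
  show (∑ e, (((1 : Matrix (Fin (r * d_B)) (Fin (r * d_B)) ℂ) ⊗ₖ V) * Psi (r * d_B) *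
        ((1 : Matrix (Fin (r * d_B)) (Fin (r * d_B)) ℂ) ⊗ₖ V)ᴴ) (a, b, e) (a', b', e)) = _
  rw [mul_apply]
  have h2 : ∀ e : Fin r, (((1 : Matrix (Fin (r * d_B)) (Fin (r * d_B)) ℂ) ⊗ₖ V) * Psi (r * d_B) *
        ((1 : Matrix (Fin (r * d_B)) (Fin (r * d_B)) ℂ) ⊗ₖ V)ᴴ) (a, b, e) (a', b', e)
      = resh c V (a, b) e * star (resh c V (a', b') e) := by
    intro e
    rw [hstep (a, (b, e)) (a', (b', e))]
    simp only [resh, star_mul']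
    have : c * V (b, e) a * (star c * star (V (b', e) a'))
        = V (b, e) a * star (V (b', e) a') * (c * star c) := by ring
    rw [this, hcc]
  exact Finset.sum_congr rfl fun e _ => h2 e

section App
variable {d_B r : ℕ}

lemma frobSq_toBE (M : Matrix (Fin (r * d_B)) (Fin (r * d_B)) ℂ) :
    frobSq (toBE (d_B := d_B) (r := r) M) = frobSq M := by
  rw [frobSq_eq_sum, frobSq_eq_sum]
  refine Finset.sum_congr rfl fun j _ => ?_
  exact Fintype.sum_equiv (finProdFinEquiv.trans (finCongr (Nat.mul_comm d_B r)))
    _ _ (fun p => rfl)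

lemma resh_sub {d : ℕ} (c : ℂ) (M N : Matrix (Fin d_B × Fin r) (Fin d) ℂ) :
    resh c M - resh c N = resh c (M - N) := by
  funext p e
  simp [resh, mul_sub]

lemma toBE_sub (M N : Matrix (Fin (r * d_B)) (Fin (r * d_B)) ℂ) :
    toBE (d_B := d_B) (r := r) M - toBE N = toBE (M - N) := rfl

lemma frobSq_resh {d : ℕ} (c : ℂ) (M : Matrix (Fin d_B × Fin r) (Fin d) ℂ) :
    frobSq (resh c M) = ‖c‖ ^ 2 * frobSq M := by
  rw [frobSq_eq_sum, frobSq_eq_sum, Finset.mul_sum]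
  have lhs : ∀ e : Fin r, (∑ p : Fin d × Fin d_B, ‖resh c M p e‖ ^ 2)
      = ∑ a : Fin d, ∑ b : Fin d_B, ‖c‖ ^ 2 * ‖M (b, e) a‖ ^ 2 := by
    intro e
    rw [Fintype.sum_prod_type]
    exact Finset.sum_congr rfl fun a _ => Finset.sum_congr rfl fun b _ => by
      simp [resh, norm_mul, mul_pow]
  calc (∑ e, ∑ p : Fin d × Fin d_B, ‖resh c M p e‖ ^ 2)
      = ∑ e, ∑ a, ∑ b, ‖c‖ ^ 2 * ‖M (b, e) a‖ ^ 2 :=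
        Finset.sum_congr rfl fun e _ => lhs e
    _ = ∑ a, ∑ e, ∑ b, ‖c‖ ^ 2 * ‖M (b, e) a‖ ^ 2 := Finset.sum_comm
    _ = ∑ a, ∑ b, ∑ e, ‖c‖ ^ 2 * ‖M (b, e) a‖ ^ 2 :=
        Finset.sum_congr rfl fun a _ => Finset.sum_comm
    _ = ∑ a : Fin d, ‖c‖ ^ 2 * ∑ p : Fin d_B × Fin r, ‖M p a‖ ^ 2 := by
        refine Finset.sum_congr rfl fun a _ => ?_
        rw [Fintype.sum_prod_type, Finset.mul_sum]
        exact Finset.sum_congr rfl fun b _ => by rw [Finset.mul_sum]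

variable (ε θ : ℝ)

lemma frobSq_veq (hε0 : 0 < ε) (hcos : Real.cos θ = -ε / 2)
    (U : Matrix (Fin (r * d_B)) (Fin (r * d_B)) ℂ)
    (hU : Uᴴ * U = 1) (hU' : U * Uᴴ = 1) :
    frobSq (Veq d_B r ε θ U) = (r * d_B : ℕ) := by
  rw [Veq, frobSq_toBE, frobSq_unitary_right _ _ hU, frobSq_unitary_left _ _ hU,
    frobSq_one_add_omat _ _ _ hε0 hcos]

lemma veq_sub_eq (U₁ U₂ : Matrix (Fin (r * d_B)) (Fin (r * d_B)) ℂ)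
    (hU₁ : U₁ * U₁ᴴ = 1) (hU₂ : U₂ * U₂ᴴ = 1) :
    Veq d_B r ε θ U₁ - Veq d_B r ε θ U₂
    = toBE ((U₁ - U₂) * Omat (r * d_B) ε θ * U₁ᴴ + U₂ * (Omat (r * d_B) ε θ * (U₁ - U₂)ᴴ)) := by
  rw [Veq, Veq, toBE_sub]
  congr 1
  have h1 : U₁ * (1 + Omat (r * d_B) ε θ) * U₁ᴴ = 1 + U₁ * Omat (r * d_B) ε θ * U₁ᴴ := by
    rw [mul_add, mul_one, add_mul, hU₁]
  have h2 : U₂ * (1 + Omat (r * d_B) ε θ) * U₂ᴴ = 1 + U₂ * Omat (r * d_B) ε θ * U₂ᴴ := by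
    rw [mul_add, mul_one, add_mul, hU₂]
  rw [h1, h2]
  congr 1
  simp only [conjTranspose_sub, sub_mul, mul_sub, Matrix.mul_assoc]
  abel

lemma frobNorm_veq_sub_le (hε0 : 0 < ε)
    (U₁ U₂ : Matrix (Fin (r * d_B)) (Fin (r * d_B)) ℂ)
    (hU₁ : U₁ᴴ * U₁ = 1) (hU₁' : U₁ * U₁ᴴ = 1)
    (hU₂ : U₂ᴴ * U₂ = 1) (hU₂' : U₂ * U₂ᴴ = 1) :
    frobNorm (Veq d_B r ε θ U₁ - Veq d_B r ε θ U₂) ≤ 2 * ε * frobNorm (U₁ - U₂) := by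
  rw [veq_sub_eq ε θ U₁ U₂ hU₁' hU₂']
  have hBE : ∀ M : Matrix (Fin (r * d_B)) (Fin (r * d_B)) ℂ, frobNorm (toBE (d_B := d_B) M)
      = frobNorm M := fun M => by rw [frobNorm_eq_sqrt, frobNorm_eq_sqrt, frobSq_toBE]
  have hsplit : toBE (d_B := d_B) ((U₁ - U₂) * Omat (r * d_B) ε θ * U₁ᴴ
      + U₂ * (Omat (r * d_B) ε θ * (U₁ - U₂)ᴴ))
      = toBE ((U₁ - U₂) * Omat (r * d_B) ε θ * U₁ᴴ)
      + toBE (U₂ * (Omat (r * d_B) ε θ * (U₁ - U₂)ᴴ)) := rfl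
  rw [hsplit]
  have tri := frobNorm_add_le (toBE (d_B := d_B) ((U₁ - U₂) * Omat (r * d_B) ε θ * U₁ᴴ))
    (toBE (U₂ * (Omat (r * d_B) ε θ * (U₁ - U₂)ᴴ)))
  have b1 : frobNorm (toBE (d_B := d_B) ((U₁ - U₂) * Omat (r * d_B) ε θ * U₁ᴴ))
      ≤ ε * frobNorm (U₁ - U₂) := by
    rw [hBE, frobNorm_eq_sqrt, frobNorm_eq_sqrt, frobSq_unitary_right _ _ hU₁]
    have h := frobSq_mul_omat_le (r * d_B) ε θ hε0 (U₁ - U₂)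
    calc Real.sqrt (frobSq ((U₁ - U₂) * Omat (r * d_B) ε θ))
        ≤ Real.sqrt (ε ^ 2 * frobSq (U₁ - U₂)) := Real.sqrt_le_sqrt h
      _ = ε * Real.sqrt (frobSq (U₁ - U₂)) := by
          rw [Real.sqrt_mul (by positivity), Real.sqrt_sq (le_of_lt hε0)]
  have b2 : frobNorm (toBE (d_B := d_B) (U₂ * (Omat (r * d_B) ε θ * (U₁ - U₂)ᴴ)))
      ≤ ε * frobNorm (U₁ - U₂) := by
    rw [hBE, frobNorm_eq_sqrt, frobSq_unitary_left _ _ hU₂, frobNorm_eq_sqrt]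
    have h := frobSq_omat_mul_le (r * d_B) ε θ hε0 (U₁ - U₂)ᴴ
    rw [frobSq_conjTranspose] at h
    calc Real.sqrt (frobSq (Omat (r * d_B) ε θ * (U₁ - U₂)ᴴ))
        ≤ Real.sqrt (ε ^ 2 * frobSq (U₁ - U₂)) := Real.sqrt_le_sqrt h
      _ = ε * Real.sqrt (frobSq (U₁ - U₂)) := by
          rw [Real.sqrt_mul (by positivity), Real.sqrt_sq (le_of_lt hε0)]
  calc _ ≤ _ := tri
    _ ≤ ε * frobNorm (U₁ - U₂) + ε * frobNorm (U₁ - U₂) := add_le_add b1 b2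
    _ = 2 * ε * frobNorm (U₁ - U₂) := by ring

end App

end AppAux

section Final
open Matrix Complex

lemma norm_c_sq (x : ℝ) (hx : 0 ≤ x) :
    ‖(((Real.sqrt x : ℝ) : ℂ))⁻¹‖ ^ 2 = x⁻¹ := by
  rw [norm_inv, Complex.norm_real, Real.norm_eq_abs, _root_.abs_of_nonneg (Real.sqrt_nonneg _),
    inv_pow, Real.sq_sqrt hx]

lemma norm_c_eq (x : ℝ) (hx : 0 ≤ x) :
    ‖(((Real.sqrt x : ℝ) : ℂ))⁻¹‖ = Real.sqrt x⁻¹ := by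
  rw [← norm_c_sq x hx, Real.sqrt_sq (norm_nonneg _)]

variable {d_B r : ℕ}

lemma frobNorm_G (hd : 0 < r * d_B) (ε θ : ℝ) (hε0 : 0 < ε) (hcos : Real.cos θ = -ε / 2)
    (U : Matrix (Fin (r * d_B)) (Fin (r * d_B)) ℂ) (hU : Uᴴ * U = 1) (hU' : U * Uᴴ = 1) :
    frobNorm (resh (((Real.sqrt (r * d_B) : ℝ) : ℂ))⁻¹ (Veq d_B r ε θ U)) = 1 := by
  have hpos : (0 : ℝ) < (r : ℝ) * (d_B : ℝ) := by exact_mod_cast hd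
  have hcast : ((r * d_B : ℕ) : ℝ) = (r : ℝ) * (d_B : ℝ) := by push_cast; ring
  rw [frobNorm_eq_sqrt, frobSq_resh, frobSq_veq ε θ hε0 hcos U hU hU',
    norm_c_sq _ (le_of_lt hpos), hcast, inv_mul_cancel₀ (ne_of_gt hpos), Real.sqrt_one]

lemma frobNorm_G_sub (hd : 0 < r * d_B) (ε θ : ℝ) (hε0 : 0 < ε)
    (U U' : Matrix (Fin (r * d_B)) (Fin (r * d_B)) ℂ)
    (hU : Uᴴ * U = 1) (hU2 : U * Uᴴ = 1) (hV : U'ᴴ * U' = 1) (hV2 : U' * U'ᴴ = 1) :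
    frobNorm (resh (((Real.sqrt (r * d_B) : ℝ) : ℂ))⁻¹ (Veq d_B r ε θ U)
        - resh (((Real.sqrt (r * d_B) : ℝ) : ℂ))⁻¹ (Veq d_B r ε θ U'))
      ≤ 2 * ε * frobNorm (U - U') * Real.sqrt (((r : ℝ) * (d_B : ℝ)))⁻¹ := by
  rw [resh_sub, frobNorm_eq_sqrt, frobSq_resh]
  have hfn := frobNorm_veq_sub_le ε θ hε0 U U' hU hU2 hV hV2
  have hnn : (0 : ℝ) ≤ 2 * ε * frobNorm (U - U') :=
    mul_nonneg (by positivity) (frobNorm_nonneg _)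
  have hfs : frobSq (Veq d_B r ε θ U - Veq d_B r ε θ U')
      ≤ (2 * ε * frobNorm (U - U')) ^ 2 := by
    have h1 : frobSq (Veq d_B r ε θ U - Veq d_B r ε θ U')
        = frobNorm (Veq d_B r ε θ U - Veq d_B r ε θ U') ^ 2 := by
      rw [frobNorm_eq_sqrt, Real.sq_sqrt (frobSq_nonneg _)]
    rw [h1]
    exact pow_le_pow_left₀ (frobNorm_nonneg _) hfn 2
  set c : ℂ := (((Real.sqrt (r * d_B) : ℝ) : ℂ))⁻¹ with hc
  calc Real.sqrt (‖c‖ ^ 2 * frobSq (Veq d_B r ε θ U - Veq d_B r ε θ U'))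
      ≤ Real.sqrt (‖c‖ ^ 2 * (2 * ε * frobNorm (U - U')) ^ 2) := by
        exact Real.sqrt_le_sqrt (mul_le_mul_of_nonneg_left hfs (sq_nonneg _))
    _ = ‖c‖ * (2 * ε * frobNorm (U - U')) := by
        rw [Real.sqrt_mul (sq_nonneg _), Real.sqrt_sq (norm_nonneg _), Real.sqrt_sq hnn]
    _ = 2 * ε * frobNorm (U - U') * Real.sqrt (((r : ℝ) * (d_B : ℝ)))⁻¹ := by
        have hpos : (0 : ℝ) < (r : ℝ) * (d_B : ℝ) := by exact_mod_cast hd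
        rw [hc, norm_c_eq _ (le_of_lt hpos)]
        ring

lemma onesided (hd : 0 < r * d_B) (ε θ : ℝ) (hε0 : 0 < ε) (hcos : Real.cos θ = -ε / 2)
    (U₁ U₂ U₁' U₂' : Matrix (Fin (r * d_B)) (Fin (r * d_B)) ℂ)
    (h1a : U₁ᴴ * U₁ = 1) (h1b : U₁ * U₁ᴴ = 1)
    (h2a : U₂ᴴ * U₂ = 1) (h2b : U₂ * U₂ᴴ = 1)
    (h3a : U₁'ᴴ * U₁' = 1) (h3b : U₁' * U₁'ᴴ = 1)
    (h4a : U₂'ᴴ * U₂' = 1) (h4b : U₂' * U₂'ᴴ = 1) :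
    traceNorm (Jeq d_B r ε θ U₁ - Jeq d_B r ε θ U₂)
      ≤ traceNorm (Jeq d_B r ε θ U₁' - Jeq d_B r ε θ U₂')
        + 2 * (2 * ε * frobNorm (U₁ - U₁') * Real.sqrt (((r : ℝ) * (d_B : ℝ)))⁻¹)
        + 2 * (2 * ε * frobNorm (U₂ - U₂') * Real.sqrt (((r : ℝ) * (d_B : ℝ)))⁻¹) := by
  set c : ℂ := (((Real.sqrt (r * d_B) : ℝ) : ℂ))⁻¹ with hc
  have hdec : Jeq d_B r ε θ U₁ - Jeq d_B r ε θ U₂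
      = (Jeq d_B r ε θ U₁' - Jeq d_B r ε θ U₂')
        + ((resh c (Veq d_B r ε θ U₁) - resh c (Veq d_B r ε θ U₁')) * (resh c (Veq d_B r ε θ U₁))ᴴ
          + resh c (Veq d_B r ε θ U₁') * (resh c (Veq d_B r ε θ U₁) - resh c (Veq d_B r ε θ U₁'))ᴴ
          + (resh c (Veq d_B r ε θ U₂') - resh c (Veq d_B r ε θ U₂)) * (resh c (Veq d_B r ε θ U₂'))ᴴ
          + resh c (Veq d_B r ε θ U₂) * (resh c (Veq d_B r ε θ U₂') - resh c (Veq d_B r ε θ U₂))ᴴ) := by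
    rw [Jeq_eq d_B r hd ε θ U₁, Jeq_eq d_B r hd ε θ U₂, Jeq_eq d_B r hd ε θ U₁',
      Jeq_eq d_B r hd ε θ U₂']
    simp only [conjTranspose_sub, Matrix.sub_mul, Matrix.mul_sub, ← hc]
    abel
  set G₁ := resh c (Veq d_B r ε θ U₁) with hG₁
  set G₂ := resh c (Veq d_B r ε θ U₂) with hG₂
  set G₁' := resh c (Veq d_B r ε θ U₁') with hG₁'
  set G₂' := resh c (Veq d_B r ε θ U₂') with hG₂'
  have hk := key _ _ _ _ _ _ _ _ _ _ hdec
  have e1 : frobNorm G₁ = 1 := frobNorm_G hd ε θ hε0 hcos U₁ h1a h1b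
  have e2 : frobNorm G₂ = 1 := frobNorm_G hd ε θ hε0 hcos U₂ h2a h2b
  have e3 : frobNorm G₁' = 1 := frobNorm_G hd ε θ hε0 hcos U₁' h3a h3b
  have e4 : frobNorm G₂' = 1 := frobNorm_G hd ε θ hε0 hcos U₂' h4a h4b
  have b1 : frobNorm (G₁ - G₁') ≤ 2 * ε * frobNorm (U₁ - U₁') * Real.sqrt (((r : ℝ) * (d_B : ℝ)))⁻¹ :=
    frobNorm_G_sub hd ε θ hε0 U₁ U₁' h1a h1b h3a h3b
  have b2 : frobNorm (G₂' - G₂) ≤ 2 * ε * frobNorm (U₂ - U₂') * Real.sqrt (((r : ℝ) * (d_B : ℝ)))⁻¹ := by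
    have := frobNorm_G_sub hd ε θ hε0 U₂' U₂ h4a h4b h2a h2b
    rwa [frobNorm_sub_comm U₂' U₂] at this
  rw [e1, e2, e3, e4] at hk
  calc traceNorm (Jeq d_B r ε θ U₁ - Jeq d_B r ε θ U₂)
      ≤ traceNorm (Jeq d_B r ε θ U₁' - Jeq d_B r ε θ U₂')
        + (frobNorm (G₁ - G₁') * 1 + 1 * frobNorm (G₁ - G₁')
          + frobNorm (G₂' - G₂) * 1 + 1 * frobNorm (G₂' - G₂)) := hk
    _ ≤ _ := by
        rw [mul_one, one_mul, mul_one, one_mul]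
        linarith [b1, b2]

end Final

/-- Lipschitz bound for `f(U₁,U₂) = ‖J_{U₁} − J_{U₂}‖₁` in the case
`d_A = r·d_B`. -/
theorem stmt_6 (d_B r : ℕ) (hB : 1 ≤ d_B) (hr : 1 ≤ r) (ε θ : ℝ)
    (hε0 : 0 < ε) (hε1 : ε < 1)
    (hθ1 : Real.pi / 2 < θ) (hθ2 : θ ≤ Real.pi) (hcos : Real.cos θ = -ε / 2)
    (U₁ U₂ U₁' U₂' : Matrix.unitaryGroup (Fin (r * d_B)) ℂ) :
    |traceNorm (Jeq d_B r ε θ ↑U₁ - Jeq d_B r ε θ ↑U₂) -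
        traceNorm (Jeq d_B r ε θ ↑U₁' - Jeq d_B r ε θ ↑U₂')| ≤
      4 * Real.sqrt (2 / (r * d_B : ℝ)) * ε *
        Real.sqrt (frobNorm ((U₁ : Matrix (Fin (r * d_B)) (Fin (r * d_B)) ℂ) - (U₁' : Matrix _ _ ℂ)) ^ 2 +
          frobNorm ((U₂ : Matrix (Fin (r * d_B)) (Fin (r * d_B)) ℂ) - (U₂' : Matrix _ _ ℂ)) ^ 2) := by
  have hd : 0 < r * d_B := Nat.mul_pos hr hB
  have h1a : (U₁ : Matrix (Fin (r * d_B)) (Fin (r * d_B)) ℂ)ᴴ * (U₁ : Matrix (Fin (r * d_B)) (Fin (r * d_B)) ℂ) = 1 := by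
    have := Matrix.mem_unitaryGroup_iff'.mp U₁.2
    rwa [Matrix.star_eq_conjTranspose] at this
  have h1b : (U₁ : Matrix (Fin (r * d_B)) (Fin (r * d_B)) ℂ) * (U₁ : Matrix (Fin (r * d_B)) (Fin (r * d_B)) ℂ)ᴴ = 1 := by
    have := Matrix.mem_unitaryGroup_iff.mp U₁.2
    rwa [Matrix.star_eq_conjTranspose] at this
  have h2a : (U₂ : Matrix (Fin (r * d_B)) (Fin (r * d_B)) ℂ)ᴴ * (U₂ : Matrix (Fin (r * d_B)) (Fin (r * d_B)) ℂ) = 1 := by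
    have := Matrix.mem_unitaryGroup_iff'.mp U₂.2
    rwa [Matrix.star_eq_conjTranspose] at this
  have h2b : (U₂ : Matrix (Fin (r * d_B)) (Fin (r * d_B)) ℂ) * (U₂ : Matrix (Fin (r * d_B)) (Fin (r * d_B)) ℂ)ᴴ = 1 := by
    have := Matrix.mem_unitaryGroup_iff.mp U₂.2
    rwa [Matrix.star_eq_conjTranspose] at this
  have h3a : (U₁' : Matrix (Fin (r * d_B)) (Fin (r * d_B)) ℂ)ᴴ * (U₁' : Matrix (Fin (r * d_B)) (Fin (r * d_B)) ℂ) = 1 := by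
    have := Matrix.mem_unitaryGroup_iff'.mp U₁'.2
    rwa [Matrix.star_eq_conjTranspose] at this
  have h3b : (U₁' : Matrix (Fin (r * d_B)) (Fin (r * d_B)) ℂ) * (U₁' : Matrix (Fin (r * d_B)) (Fin (r * d_B)) ℂ)ᴴ = 1 := by
    have := Matrix.mem_unitaryGroup_iff.mp U₁'.2
    rwa [Matrix.star_eq_conjTranspose] at this
  have h4a : (U₂' : Matrix (Fin (r * d_B)) (Fin (r * d_B)) ℂ)ᴴ * (U₂' : Matrix (Fin (r * d_B)) (Fin (r * d_B)) ℂ) = 1 := by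
    have := Matrix.mem_unitaryGroup_iff'.mp U₂'.2
    rwa [Matrix.star_eq_conjTranspose] at this
  have h4b : (U₂' : Matrix (Fin (r * d_B)) (Fin (r * d_B)) ℂ) * (U₂' : Matrix (Fin (r * d_B)) (Fin (r * d_B)) ℂ)ᴴ = 1 := by
    have := Matrix.mem_unitaryGroup_iff.mp U₂'.2
    rwa [Matrix.star_eq_conjTranspose] at this
  set s : ℝ := Real.sqrt (((r : ℝ) * (d_B : ℝ)))⁻¹ with hs
  set δ₁ : ℝ := frobNorm ((U₁ : Matrix (Fin (r * d_B)) (Fin (r * d_B)) ℂ) - (U₁' : Matrix (Fin (r * d_B)) (Fin (r * d_B)) ℂ)) with hδ₁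
  set δ₂ : ℝ := frobNorm ((U₂ : Matrix (Fin (r * d_B)) (Fin (r * d_B)) ℂ) - (U₂' : Matrix (Fin (r * d_B)) (Fin (r * d_B)) ℂ)) with hδ₂
  have hδ₁0 : 0 ≤ δ₁ := frobNorm_nonneg _
  have hδ₂0 : 0 ≤ δ₂ := frobNorm_nonneg _
  have hs0 : 0 ≤ s := Real.sqrt_nonneg _
  have hsqrt : Real.sqrt (2 / ((r : ℝ) * (d_B : ℝ))) = Real.sqrt 2 * s := by
    rw [hs, div_eq_mul_inv, Real.sqrt_mul (by norm_num)]
  have hδ : δ₁ + δ₂ ≤ Real.sqrt 2 * Real.sqrt (δ₁ ^ 2 + δ₂ ^ 2) := by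
    have h0 : δ₁ + δ₂ = Real.sqrt ((δ₁ + δ₂) ^ 2) :=
      (Real.sqrt_sq (add_nonneg hδ₁0 hδ₂0)).symm
    rw [h0, ← Real.sqrt_mul (by norm_num)]
    exact Real.sqrt_le_sqrt (by nlinarith [sq_nonneg (δ₁ - δ₂)])
  have hnum : 2 * (2 * ε * δ₁ * s) + 2 * (2 * ε * δ₂ * s)
      ≤ 4 * Real.sqrt (2 / ((r : ℝ) * (d_B : ℝ))) * ε * Real.sqrt (δ₁ ^ 2 + δ₂ ^ 2) := by
    calc 2 * (2 * ε * δ₁ * s) + 2 * (2 * ε * δ₂ * s) = 4 * ε * s * (δ₁ + δ₂) := by ring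
      _ ≤ 4 * ε * s * (Real.sqrt 2 * Real.sqrt (δ₁ ^ 2 + δ₂ ^ 2)) := by
          refine mul_le_mul_of_nonneg_left hδ ?_
          positivity
      _ = 4 * (Real.sqrt 2 * s) * ε * Real.sqrt (δ₁ ^ 2 + δ₂ ^ 2) := by ring
      _ = 4 * Real.sqrt (2 / ((r : ℝ) * (d_B : ℝ))) * ε * Real.sqrt (δ₁ ^ 2 + δ₂ ^ 2) := by
          rw [hsqrt]
  have hfwd := onesided hd ε θ hε0 hcos ↑U₁ ↑U₂ ↑U₁' ↑U₂' h1a h1b h2a h2b h3a h3b h4a h4b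
  have hbwd := onesided hd ε θ hε0 hcos ↑U₁' ↑U₂' ↑U₁ ↑U₂ h3a h3b h4a h4b h1a h1b h2a h2b
  rw [frobNorm_sub_comm ((U₁' : Matrix (Fin (r * d_B)) (Fin (r * d_B)) ℂ)) ↑U₁,
    frobNorm_sub_comm ((U₂' : Matrix (Fin (r * d_B)) (Fin (r * d_B)) ℂ)) ↑U₂] at hbwd
  rw [abs_sub_le_iff]
  constructor
  · linarith [hfwd, hnum]
  · linarith [hbwd, hnum]

end Stmt
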